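/- arXiv:2508.07665 — 2 statements merged into one kernel-verified Lean document; each statement's English description precedes it below -/
import Mathlib

section
/- Let c > 0 and 0 < c' < c^{-1/2}. Then there is a constant C > 0 such that for all n ∈ ℕ, the double integral ∬_{0 ≤ s < t ≤ c'} (1 - c s²)ⁿ ds dt ≤ C / √(n+1). -/
/-!
On `[0, c']` we have `0 ≤ c s² ≤ 1`, and `(1 - x)ⁿ ≤ e^{-n x} ≤ e · e^{-(n+1) x}` for `x ≤ 1`.
So every inner integral is at most `e` times the half-line Gaussian integral
`∫₀^∞ e^{-(n+1) c s²} ds = √(π / ((n+1) c)) / 2`, and the outer integral over `[0, c']` costs a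
further factor `c'`.
-/

open Real Set MeasureTheory

lemma one_sub_pow_le_exp_one_mul_exp {x : ℝ} (hx : x ≤ 1) (n : ℕ) :
    (1 - x) ^ n ≤ exp 1 * exp (-((n + 1) * x)) :=
  calc (1 - x) ^ n ≤ exp (-x) ^ n := pow_le_pow_left₀ (by linarith) (one_sub_le_exp_neg x) n
    _ = exp (x - (n + 1) * x) := by rw [← exp_nat_mul]; ring_nf
    _ ≤ exp 1 * exp (-((n + 1) * x)) := by
      rw [← exp_add]; exact exp_le_exp.mpr (by linarith)

lemma intervalIntegral_exp_neg_mul_sq_le {b t : ℝ} (hb : 0 < b) (ht : 0 ≤ t) :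
    ∫ s in (0 : ℝ)..t, exp (-b * s ^ 2) ≤ √(π / b) / 2 := by
  rw [intervalIntegral.integral_of_le ht, ← integral_gaussian_Ioi b]
  exact setIntegral_mono_set (integrable_exp_neg_mul_sq hb).integrableOn
    (ae_of_all _ fun _ => (exp_pos _).le) Ioc_subset_Ioi_self.eventuallyLE

lemma intervalIntegral_one_sub_mul_sq_pow_le {c t : ℝ} (hc : 0 < c) (ht₀ : 0 ≤ t)
    (ht₁ : c * t ^ 2 ≤ 1) (n : ℕ) :
    ∫ s in (0 : ℝ)..t, (1 - c * s ^ 2) ^ n ≤ exp 1 * √(π / c) / 2 / √(n + 1) := by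
  have hb : 0 < (n + 1) * c := by positivity
  have hpointwise : ∀ s ∈ Icc 0 t, (1 - c * s ^ 2) ^ n ≤ exp 1 * exp (-((n + 1) * c) * s ^ 2) :=
    fun s ⟨hs₀, hst⟩ => by
      have : c * s ^ 2 ≤ c * t ^ 2 := by gcongr
      simpa [neg_mul, mul_assoc] using
        one_sub_pow_le_exp_one_mul_exp (this.trans ht₁) n
  calc ∫ s in (0 : ℝ)..t, (1 - c * s ^ 2) ^ n
      ≤ ∫ s in (0 : ℝ)..t, exp 1 * exp (-((n + 1) * c) * s ^ 2) :=
        intervalIntegral.integral_mono_on ht₀ ((by fun_prop : Continuous _).intervalIntegrable _ _)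
          ((by fun_prop : Continuous _).intervalIntegrable _ _) hpointwise
    _ ≤ exp 1 * (√(π / ((n + 1) * c)) / 2) := by
        rw [intervalIntegral.integral_const_mul]
        exact mul_le_mul_of_nonneg_left (intervalIntegral_exp_neg_mul_sq_le hb ht₀) (exp_pos 1).le
    _ = exp 1 * √(π / c) / 2 / √(n + 1) := by
        rw [mul_comm _ c, ← div_div, sqrt_div' _ (by positivity : (0 : ℝ) ≤ n + 1)]; ring

theorem double_integral_decay (c c' : ℝ) (hc : 0 < c) (hc'0 : 0 < c')
    (hc' : c' < 1 / Real.sqrt c) :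
    ∃ C > (0:ℝ), ∀ n : ℕ,
      (∫ t in (0:ℝ)..c', ∫ s in (0:ℝ)..t, (1 - c * s ^ 2) ^ n)
        ≤ C / Real.sqrt ((n : ℝ) + 1) := by
  have hcc' : c * c' ^ 2 < 1 := by
    have h : √c * c' < 1 := by rw [mul_comm, ← lt_div_iff₀ (sqrt_pos.mpr hc)]; exact hc'
    calc c * c' ^ 2 = (√c * c') ^ 2 := by rw [mul_pow, sq_sqrt hc.le]
      _ < 1 := pow_lt_one₀ (by positivity) h two_ne_zero
  refine ⟨c' * (exp 1 * √(π / c) / 2), by positivity, fun n => ?_⟩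
  have hinner : ∀ t ∈ Icc 0 c',
      ∫ s in (0 : ℝ)..t, (1 - c * s ^ 2) ^ n ≤ exp 1 * √(π / c) / 2 / √(n + 1) :=
    fun t ⟨ht₀, ht⟩ => intervalIntegral_one_sub_mul_sq_pow_le hc ht₀
      (le_trans (by gcongr) hcc'.le) n
  have hintegrand : Continuous fun s : ℝ => (1 - c * s ^ 2) ^ n := by fun_prop
  have hprimitive : Continuous fun t => ∫ s in (0 : ℝ)..t, (1 - c * s ^ 2) ^ n :=
    intervalIntegral.continuous_primitive (fun _ _ => hintegrand.intervalIntegrable _ _) 0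
  calc (∫ t in (0:ℝ)..c', ∫ s in (0:ℝ)..t, (1 - c * s ^ 2) ^ n)
      ≤ ∫ _ in (0:ℝ)..c', exp 1 * √(π / c) / 2 / √(n + 1) :=
        intervalIntegral.integral_mono_on hc'0.le (hprimitive.intervalIntegrable _ _)
          intervalIntegrable_const hinner
    _ = c' * (exp 1 * √(π / c) / 2) / √(n + 1) := by
        rw [intervalIntegral.integral_const, sub_zero, smul_eq_mul]; ring
end

section
/- For every integer k ≥ 4, the quantity 3·[B(2(k-2), k+2)/(2^{k-3}Γ(k-2))]·[2^{k-1}Γ(k)/B(2k, k+2)] − ([B(2(k-1), k+2)/(2^{k-2}Γ(k-1))]·[2^{k-1}Γ(k)/B(2k, k+2)])² is strictly positive, and equals 18k(3k+1)(2k(k(3k−5)+4)−1)/((2k−1)²(2k−3)). -/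
/-!
For `m(j) = B(2(k-j), k+2)/(2^(k-1-j) Γ(k-j))`, applying `B(x+1, y) = x/(x+y) · B(x, y)` twice
at `x = 2(k-j-1)`, `y = k+2`, together with `Γ(s+1) = sΓ(s)`, gives
`m(j+1) = (3k-2j)(3k-2j+1)/(2k-2j-1) · m(j)`.
Hence `m(1)/m(0) = 3k(3k+1)/(2k-1)` and `m(2)/m(0) = 3k(3k+1)(3k-1)(3k-2)/((2k-1)(2k-3))`,
and the quantity `3 m(2)/m(0) - (m(1)/m(0))²` is a rational function of `k`, positive
for `k > 3/2`.
-/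

/-- The Beta function. -/
noncomputable def Beta (x y : ℝ) : ℝ := Real.Gamma x * Real.Gamma y / Real.Gamma (x + y)

theorem Beta_pos {x y : ℝ} (hx : 0 < x) (hy : 0 < y) : 0 < Beta x y :=
  div_pos (mul_pos (Real.Gamma_pos_of_pos hx) (Real.Gamma_pos_of_pos hy))
    (Real.Gamma_pos_of_pos (add_pos hx hy))

theorem Beta_add_one_left {x y : ℝ} (hx : x ≠ 0) (hxy : x + y ≠ 0) :
    Beta (x + 1) y = x / (x + y) * Beta x y := by
  unfold Beta
  rw [add_right_comm, Real.Gamma_add_one hx, Real.Gamma_add_one hxy, mul_assoc, mul_div_mul_comm]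

/-- `wendlandValueAtZero k j = (I^(k-j) φ_{k+1})(0)`, by
`(I^m f)(0) = ∫₀^∞ s^(2m-1) f(s) ds / (2^(m-1) Γ(m))` and `∫₀¹ s^(2m-1) (1-s)^(k+1) ds = B(2m, k+2)`. -/
noncomputable def wendlandValueAtZero (k j : ℕ) : ℝ :=
  Beta (2 * ((k : ℝ) - j)) ((k : ℝ) + 2) / (2 ^ (k - 1 - j) * Real.Gamma ((k : ℝ) - j))

theorem wendlandValueAtZero_pos {k j : ℕ} (hj : j < k) : 0 < wendlandValueAtZero k j := by
  have hkj : (0 : ℝ) < (k : ℝ) - j := sub_pos.mpr (by exact_mod_cast hj)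
  exact div_pos (Beta_pos (by linarith) (by positivity))
    (mul_pos (by positivity) (Real.Gamma_pos_of_pos hkj))

theorem wendlandValueAtZero_succ {k j : ℕ} (hj : j + 2 ≤ k) :
    wendlandValueAtZero k (j + 1) =
      (3 * k - 2 * j) * (3 * k - 2 * j + 1) / (2 * k - 2 * j - 1) * wendlandValueAtZero k j := by
  have hkj : (1 : ℝ) ≤ (k : ℝ) - j - 1 := by
    have : (j : ℝ) + 2 ≤ k := by exact_mod_cast hj
    linarith
  have hBeta : Beta (2 * ((k : ℝ) - j)) ((k : ℝ) + 2) =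
      (2 * k - 2 * j - 1) / (3 * k - 2 * j + 1) *
        (2 * ((k : ℝ) - j - 1) / (3 * k - 2 * j) * Beta (2 * ((k : ℝ) - j - 1)) ((k : ℝ) + 2)) := by
    rw [show 2 * ((k : ℝ) - j) = 2 * ((k : ℝ) - j - 1) + 1 + 1 by ring,
      Beta_add_one_left (by positivity) (by positivity),
      Beta_add_one_left (by positivity) (by positivity)]
    ring
  have hGamma : Real.Gamma ((k : ℝ) - j) = ((k : ℝ) - j - 1) * Real.Gamma ((k : ℝ) - j - 1) := by
    rw [← Real.Gamma_add_one (by positivity), sub_add_cancel]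
  have hpow : (2 : ℝ) ^ (k - 1 - j) = 2 * 2 ^ (k - 1 - (j + 1)) := by
    rw [← pow_succ']
    congr 1
    omega
  have hΓpos := Real.Gamma_pos_of_pos (show (0 : ℝ) < (k : ℝ) - j - 1 by linarith)
  unfold wendlandValueAtZero
  rw [hBeta, hGamma, hpow]
  push_cast
  rw [← sub_sub]
  -- stated in the normal form that `field_simp` gives the denominators
  have h1 : 2 * ((k : ℝ) - j) - 1 ≠ 0 := by linarith
  have h2 : (k : ℝ) * 3 - 2 * j ≠ 0 := by linarith
  have h3 : (k : ℝ) * 3 - 2 * j + 1 ≠ 0 := by linarith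
  have h4 : (k : ℝ) - j - 1 ≠ 0 := by linarith
  field_simp

theorem wendlandValueAtZero_one_div_zero {k : ℕ} (hk : 2 ≤ k) :
    wendlandValueAtZero k 1 / wendlandValueAtZero k 0 = 3 * k * (3 * k + 1) / (2 * k - 1) := by
  rw [wendlandValueAtZero_succ hk, mul_div_assoc, div_self (wendlandValueAtZero_pos (by omega)).ne']
  push_cast
  ring

theorem wendlandValueAtZero_two_div_zero {k : ℕ} (hk : 3 ≤ k) :
    wendlandValueAtZero k 2 / wendlandValueAtZero k 0 =
      3 * k * (3 * k + 1) * (3 * k - 1) * (3 * k - 2) / ((2 * k - 1) * (2 * k - 3)) := by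
  rw [wendlandValueAtZero_succ hk, mul_div_assoc, wendlandValueAtZero_one_div_zero (by omega)]
  have hk' : (3 : ℝ) ≤ k := by exact_mod_cast hk
  have h1 : (2 * k - 1 : ℝ) ≠ 0 := by linarith
  have h3 : (2 * k - 3 : ℝ) ≠ 0 := by linarith
  push_cast
  field_simp
  ring

theorem wendland_A2_rational_eq {x : ℝ} (hx : 3 / 2 < x) :
    3 * (3 * x * (3 * x + 1) * (3 * x - 1) * (3 * x - 2) / ((2 * x - 1) * (2 * x - 3))) -
        (3 * x * (3 * x + 1) / (2 * x - 1)) ^ 2 =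
      18 * x * (3 * x + 1) * (2 * x * (x * (3 * x - 5) + 4) - 1) / ((2 * x - 1) ^ 2 * (2 * x - 3)) := by
  have h1 : 2 * x - 1 ≠ 0 := by linarith
  have h3 : 2 * x - 3 ≠ 0 := by linarith
  rw [div_pow, mul_div_assoc', div_sub_div _ _ (mul_ne_zero h1 h3) (pow_ne_zero 2 h1),
    div_eq_div_iff (mul_ne_zero (mul_ne_zero h1 h3) (pow_ne_zero 2 h1)) (mul_ne_zero (pow_ne_zero 2 h1) h3)]
  ring

theorem wendland_A2_rational_pos {x : ℝ} (hx : 3 / 2 < x) :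
    0 < 18 * x * (3 * x + 1) * (2 * x * (x * (3 * x - 5) + 4) - 1) /
      ((2 * x - 1) ^ 2 * (2 * x - 3)) := by
  have hcubic : 0 < 2 * x * (x * (3 * x - 5) + 4) - 1 := by nlinarith [sq_nonneg (x - 1)]
  have h1 : 0 < 2 * x - 1 := by linarith
  have h3 : 0 < 2 * x - 3 := by linarith
  positivity

theorem wendland_A2_quantity (k : ℕ) (hk : 4 ≤ k) :
    (0:ℝ) <
      3 * (Beta (2 * ((k : ℝ) - 2)) ((k : ℝ) + 2) / (2 ^ (k - 3) * Real.Gamma ((k : ℝ) - 2))) *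
          (2 ^ (k - 1) * Real.Gamma (k : ℝ) / Beta (2 * (k : ℝ)) ((k : ℝ) + 2)) -
        ((Beta (2 * ((k : ℝ) - 1)) ((k : ℝ) + 2) / (2 ^ (k - 2) * Real.Gamma ((k : ℝ) - 1))) *
          (2 ^ (k - 1) * Real.Gamma (k : ℝ) / Beta (2 * (k : ℝ)) ((k : ℝ) + 2))) ^ 2 ∧
    3 * (Beta (2 * ((k : ℝ) - 2)) ((k : ℝ) + 2) / (2 ^ (k - 3) * Real.Gamma ((k : ℝ) - 2))) *
          (2 ^ (k - 1) * Real.Gamma (k : ℝ) / Beta (2 * (k : ℝ)) ((k : ℝ) + 2)) -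
        ((Beta (2 * ((k : ℝ) - 1)) ((k : ℝ) + 2) / (2 ^ (k - 2) * Real.Gamma ((k : ℝ) - 1))) *
          (2 ^ (k - 1) * Real.Gamma (k : ℝ) / Beta (2 * (k : ℝ)) ((k : ℝ) + 2))) ^ 2
      = 18 * (k : ℝ) * (3 * (k : ℝ) + 1) *
          (2 * (k : ℝ) * ((k : ℝ) * (3 * (k : ℝ) - 5) + 4) - 1) /
          ((2 * (k : ℝ) - 1) ^ 2 * (2 * (k : ℝ) - 3)) := by
  have hm0 : 2 ^ (k - 1) * Real.Gamma (k : ℝ) / Beta (2 * (k : ℝ)) ((k : ℝ) + 2) =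
      (wendlandValueAtZero k 0)⁻¹ := by
    simp [wendlandValueAtZero]
  have hm1 : Beta (2 * ((k : ℝ) - 1)) ((k : ℝ) + 2) / (2 ^ (k - 2) * Real.Gamma ((k : ℝ) - 1)) =
      wendlandValueAtZero k 1 := by
    simp [wendlandValueAtZero, Nat.sub_sub]
  have hm2 : Beta (2 * ((k : ℝ) - 2)) ((k : ℝ) + 2) / (2 ^ (k - 3) * Real.Gamma ((k : ℝ) - 2)) =
      wendlandValueAtZero k 2 := by
    simp [wendlandValueAtZero, Nat.sub_sub]
  rw [hm0, hm1, hm2, ← div_eq_mul_inv, ← div_eq_mul_inv, mul_div_assoc,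
    wendlandValueAtZero_one_div_zero (by omega), wendlandValueAtZero_two_div_zero (by omega)]
  have hk' : (3 / 2 : ℝ) < k := by
    have : (4 : ℝ) ≤ k := by exact_mod_cast hk
    linarith
  rw [wendland_A2_rational_eq hk']
  exact ⟨wendland_A2_rational_pos hk', rfl⟩
end
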